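/- For X uniform on (0,1) and a single decision boundary l in (0,1) shared by two users, with the Bayes estimate of the max being l/sqrt(3) when both users are below l: the expected distortion contribution E[(max(X_1,X_2) - z) * 1{both below l}] minimized over z in [0,l] is attained at z = l/sqrt(3) and equals (2(sqrt(3)-1)/(3*sqrt(3))) * l^3. -/

import Mathlib

/-!
Splitting the integral at `z`, the objective is `l²·(E[M] − z·P(M ≥ z))` for the conditional
law of `M`, i.e. the cubic `2l³/3 − z(l² − z²)`. With `l² = 3z₀²` this is `2l³/3 + z³ − 3z₀²z`, and
`z³ − 3z₀²z − (z₀³ − 3z₀²z₀) = (z − z₀)²(z + 2z₀) ≥ 0` on `[0, l]`, so the minimum is at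
`z₀ = l/√3`, with value `2l³/3 − 2z₀³`.
-/

/-- Expected distortion contribution `E[d(M,z)·1{both ≤ l}]` for two i.i.d.
Uniform(0,1) sources: the max `M` conditioned on both values `≤ l` has density
`2m/l²` on `[0,l]`, and the distortion of estimate `z` is `M − z` if `z ≤ M`, else `M`;
scaled by `P(both ≤ l) = l²` this is `∫_0^l (if z ≤ m then m − z else m)·(2m) dm`. -/
noncomputable def Dunif (l z : ℝ) : ℝ :=
  ∫ m in (0 : ℝ)..l, (if z ≤ m then m - z else m) * (2 * m)

open intervalIntegral Set

theorem integral_ite_le_sub_mul {f : ℝ → ℝ} (hf : Continuous f) {l z : ℝ} (hz0 : 0 ≤ z)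
    (hzl : z ≤ l) :
    ∫ m in (0 : ℝ)..l, (if z ≤ m then m - z else m) * f m
      = (∫ m in (0 : ℝ)..l, m * f m) - z * ∫ m in z..l, f m := by
  have below : EqOn (fun m => (if z ≤ m then m - z else m) * f m) (fun m => m * f m)
      (Ioo 0 z) := fun m hm => by simp [not_le.2 hm.2]
  have above : EqOn (fun m => (if z ≤ m then m - z else m) * f m) (fun m => (m - z) * f m)
      (Ioo z l) := fun m hm => by simp [hm.1.le]
  have hmf : Continuous fun m => m * f m := by fun_prop
  have hzf : Continuous fun m => z * f m := by fun_prop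
  calc _ = (∫ m in (0 : ℝ)..z, m * f m) + ∫ m in z..l, (m * f m - z * f m) := by
        rw [← integral_add_adjacent_intervals
          ((hmf.intervalIntegrable 0 z).congr_uIoo (uIoo_of_le hz0 ▸ below.symm))
          (((hmf.sub hzf).intervalIntegrable z l).congr_uIoo
            (uIoo_of_le hzl ▸ fun m hm => by simp [above hm, sub_mul])),
          integral_congr_Ioo_of_le hz0 below, integral_congr_Ioo_of_le hzl above]
        simp only [sub_mul]
    _ = _ := by
        rw [integral_sub (hmf.intervalIntegrable z l) (hzf.intervalIntegrable z l),
          integral_const_mul, ← integral_add_adjacent_intervals (hmf.intervalIntegrable 0 z)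
          (hmf.intervalIntegrable z l)]
        ring

theorem Dunif_eq_cubic {l z : ℝ} (hz0 : 0 ≤ z) (hzl : z ≤ l) :
    Dunif l z = 2 * l ^ 3 / 3 - z * (l ^ 2 - z ^ 2) := by
  rw [Dunif, integral_ite_le_sub_mul (by fun_prop) hz0 hzl]
  simp_rw [show ∀ m : ℝ, m * (2 * m) = 2 * m ^ 2 from fun m => by ring]
  rw [integral_const_mul, integral_pow, integral_const_mul, integral_id]
  ring

theorem cube_sub_three_sq_mul_le {a z : ℝ} (hz : -(2 * a) ≤ z) :
    a ^ 3 - 3 * a ^ 2 * a ≤ z ^ 3 - 3 * a ^ 2 * z := by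
  nlinarith [mul_nonneg (sq_nonneg (z - a)) (neg_le_iff_add_nonneg.1 hz)]

theorem uniform_both_below_optimal_estimate_general (l : ℝ) (hl0 : 0 < l) :
    (∀ z ∈ Set.Icc (0 : ℝ) l, Dunif l (l / Real.sqrt 3) ≤ Dunif l z) ∧
    Dunif l (l / Real.sqrt 3)
      = 2 * (Real.sqrt 3 - 1) / (3 * Real.sqrt 3) * l ^ 3 := by
  have hs : Real.sqrt 3 ^ 2 = 3 := Real.sq_sqrt (by norm_num)
  have hs1 : 1 ≤ Real.sqrt 3 := Real.one_le_sqrt.2 (by norm_num)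
  set z₀ := l / Real.sqrt 3 with hz₀_def
  have hz₀ : 0 ≤ z₀ := by positivity
  have hz₀l : z₀ ≤ l := div_le_self hl0.le hs1
  have hl_sq : l ^ 2 = 3 * z₀ ^ 2 := by rw [hz₀_def, div_pow, hs]; ring
  rw [Dunif_eq_cubic hz₀ hz₀l]
  refine ⟨fun z hz => ?_, ?_⟩
  · rw [Dunif_eq_cubic hz.1 hz.2, hl_sq]
    linarith [cube_sub_three_sq_mul_le (show -(2 * z₀) ≤ z by linarith [hz.1])]
  · rw [hl_sq, hz₀_def]
    field_simp
    linear_combination 2 * hs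

/-- For Uniform(0,1) sources and a single shared boundary `l ∈ (0,1)`, the expected
distortion contribution when both users are below `l`, minimized over estimates
`z ∈ [0,l]`, is attained at `z = l/√3` and equals `(2(√3−1)/(3√3)) l³`. -/
theorem uniform_both_below_optimal_estimate (l : ℝ) (hl0 : 0 < l) (hl1 : l < 1) :
    (∀ z ∈ Set.Icc (0 : ℝ) l, Dunif l (l / Real.sqrt 3) ≤ Dunif l z) ∧
    Dunif l (l / Real.sqrt 3)
      = 2 * (Real.sqrt 3 - 1) / (3 * Real.sqrt 3) * l ^ 3 :=
  uniform_both_below_optimal_estimate_general l hl0
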